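/- arXiv:2503.18450 — 3 statements merged into one kernel-verified Lean document; each statement's English description precedes it below -/
import Mathlib

section
/- Let $d\ge 1$, $1<\alpha<2$ and $1\le p_1<\frac{\alpha}{\alpha-1}$. For measurable $\vec\psi:[0,\infty)\times\mathbb{R}^d\to\mathbb{R}^d$ define $\|\vec\psi\|_{\mathcal{M}^{p_1,q}_\alpha}$ with $q=\frac{d+\alpha}{\alpha-1}$ as $\sup_{r>0}\sup_{(t,x)} r^{-(d+\alpha)(\frac{1}{p_1}-\frac{1}{q})}\big(\iint_{|t-s|^{1/\alpha}+|x-y|<r}|\vec\psi(s,y)|^{p_1}dyds\big)^{1/p_1}$ and $\|\vec\psi\|_{L^\infty_\alpha}=\sup_{s>0}s^{\frac{\alpha-1}{\alpha}}\|\vec\psi(s,\cdot)\|_{L^\infty}$. Then there exists $C>0$ (depending only on $d,\alpha,p_1$) with $\|\vec\psi\|_{\mathcal{M}^{p_1,\frac{d+\alpha}{\alpha-1}}_\alpha}\le C\|\vec\psi\|_{L^\infty_\alpha}$; in particular $L^\infty_\alpha\subset\mathcal{M}^{p_1,\frac{d+\alpha}{\alpha-1}}_\alpha$. -/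
open MeasureTheory ENNReal

lemma aux_shift {β : ℝ} (a L : ℝ) (hβ0 : 0 < β) (hβ1 : β < 1) (ha : 0 ≤ a) (hL : 0 < L) :
    ∫⁻ s in Set.Ioo a (a+L), (ENNReal.ofReal s) ^ (-β) ∂(volume)
      ≤ ENNReal.ofReal (L^(1-β)/(1-β)) := by
  have h1 : ∫⁻ s in Set.Ioo a (a+L), (ENNReal.ofReal s) ^ (-β) ∂(volume)
      = ∫⁻ u, (Set.Ioo a (a+L)).indicator (fun s => (ENNReal.ofReal s) ^ (-β)) u ∂(volume) :=
    (lintegral_indicator measurableSet_Ioo _).symm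
  have h2 : ∫⁻ u, (Set.Ioo a (a+L)).indicator (fun s => (ENNReal.ofReal s) ^ (-β)) u ∂(volume)
      = ∫⁻ u, (Set.Ioo a (a+L)).indicator (fun s => (ENNReal.ofReal s) ^ (-β)) (u + a) ∂(volume) :=
    (lintegral_add_right_eq_self _ a).symm
  have h3 : ∀ u : ℝ, (Set.Ioo a (a+L)).indicator (fun s => (ENNReal.ofReal s) ^ (-β)) (u + a)
      ≤ (Set.Ioo 0 L).indicator (fun u => ENNReal.ofReal (u ^ (-β))) u := by
    intro u
    rcases em (u ∈ Set.Ioo 0 L) with hu | hu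
    · rw [Set.indicator_of_mem hu, Set.indicator_of_mem (by constructor <;> [linarith [hu.1]; linarith [hu.2]] : u + a ∈ Set.Ioo a (a+L))]
      rw [← ENNReal.ofReal_rpow_of_pos hu.1]
      rw [ENNReal.rpow_neg, ENNReal.rpow_neg]
      exact ENNReal.inv_le_inv.mpr (ENNReal.rpow_le_rpow (ENNReal.ofReal_le_ofReal (by linarith)) hβ0.le)
    · rw [Set.indicator_of_notMem (by
        intro hmem
        exact hu ⟨by linarith [hmem.1], by linarith [hmem.2]⟩), Set.indicator_of_notMem hu]
  have h4 : ∫⁻ u, (Set.Ioo 0 L).indicator (fun u => ENNReal.ofReal (u ^ (-β))) u ∂(volume)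
      = ∫⁻ u in Set.Ioo 0 L, ENNReal.ofReal (u ^ (-β)) ∂(volume) :=
    lintegral_indicator measurableSet_Ioo _
  have hint : IntegrableOn (fun u : ℝ => u ^ (-β)) (Set.Ioo 0 L) volume := by
    have := intervalIntegral.intervalIntegrable_rpow' (a := 0) (b := L) (r := -β) (by linarith)
    rw [intervalIntegrable_iff_integrableOn_Ioo_of_le hL.le] at this
    exact this
  have h5 : ∫⁻ u in Set.Ioo 0 L, ENNReal.ofReal (u ^ (-β)) ∂(volume)
      = ENNReal.ofReal (∫ u in Set.Ioo 0 L, u ^ (-β) ∂(volume)) := by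
    rw [← ofReal_integral_eq_lintegral_ofReal hint]
    filter_upwards [ae_restrict_mem measurableSet_Ioo] with u hu
    exact Real.rpow_nonneg hu.1.le _
  have h6 : (∫ u in Set.Ioo 0 L, u ^ (-β) ∂(volume)) = L^(1-β)/(1-β) := by
    rw [← integral_Ioc_eq_integral_Ioo, ← intervalIntegral.integral_of_le hL.le,
      integral_rpow (Or.inl (by linarith))]
    rw [Real.zero_rpow (by linarith : -β + 1 ≠ 0)]
    ring_nf
  calc ∫⁻ s in Set.Ioo a (a+L), (ENNReal.ofReal s) ^ (-β) ∂(volume)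
      ≤ ∫⁻ u, (Set.Ioo 0 L).indicator (fun u => ENNReal.ofReal (u ^ (-β))) u ∂(volume) := by
        rw [h1, h2]; exact lintegral_mono h3
    _ = ENNReal.ofReal (L^(1-β)/(1-β)) := by rw [h4, h5, h6]

lemma aux_prod {d : ℕ} (g1 : ℝ → ℝ≥0∞) (hg1 : Measurable g1) (I : Set ℝ)
    (B : Set (Fin d → ℝ)) :
    ∫⁻ q in I ×ˢ B, g1 q.1 ∂(volume : Measure (ℝ × (Fin d → ℝ)))
      = (∫⁻ s in I, g1 s ∂volume) * volume B := by
  rw [Measure.volume_eq_prod, ← Measure.prod_restrict]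
  have : ∀ q : ℝ × (Fin d → ℝ), g1 q.1 = g1 q.1 * (fun _ : Fin d → ℝ => (1:ℝ≥0∞)) q.2 := by
    intro q; simp
  calc ∫⁻ q, g1 q.1 ∂((volume.restrict I).prod (volume.restrict B))
      = ∫⁻ q, g1 q.1 * (fun _ : Fin d → ℝ => (1:ℝ≥0∞)) q.2
          ∂((volume.restrict I).prod (volume.restrict B)) := by simp
    _ = (∫⁻ s in I, g1 s ∂volume) * ∫⁻ _ in B, (1:ℝ≥0∞) ∂volume :=
        lintegral_prod_mul hg1.aemeasurable aemeasurable_const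
    _ = (∫⁻ s in I, g1 s ∂volume) * volume B := by rw [setLIntegral_one]


/-- Inclusion `L^∞_α ⊂ 𝓜^{p₁, (d+α)/(α-1)}_α` of the weighted-`L^∞` resolution
space into the parabolic Morrey space, for `1 ≤ p₁ < α/(α-1)` (functions are
extended by `0` for negative times). -/
theorem stmt_7 (d : ℕ) (hd : 1 ≤ d) (α p1 : ℝ) (hα : 1 < α ∧ α < 2)
    (hp1 : 1 ≤ p1 ∧ p1 < α / (α - 1)) :
    ∃ C > (0:ℝ), ∀ ψ : ℝ → (Fin d → ℝ) → (Fin d → ℝ),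
      (∀ s < (0:ℝ), ∀ x, ψ s x = 0) →
      (⨆ r > (0:ℝ), ⨆ t ≥ (0:ℝ), ⨆ x : Fin d → ℝ,
          ENNReal.ofReal (r ^ (-((d : ℝ) + α) * (1/p1 - (α - 1)/((d : ℝ) + α)))) *
            (∫⁻ q in {q : ℝ × (Fin d → ℝ) | |t - q.1| ^ (1/α) + ‖x - q.2‖ < r},
                ENNReal.ofReal (‖ψ q.1 q.2‖ ^ p1)) ^ (1/p1))
        ≤ ENNReal.ofReal C *
            ⨆ s > (0:ℝ), ENNReal.ofReal (s ^ ((α - 1)/α)) *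
              ⨆ x : Fin d → ℝ, (‖ψ s x‖₊ : ℝ≥0∞) := by
  obtain ⟨hα1, hα2⟩ := hα
  obtain ⟨hp11, hp12⟩ := hp1
  have hαpos : (0:ℝ) < α := by linarith
  have hp1pos : (0:ℝ) < p1 := by linarith
  set γ : ℝ := (α - 1)/α with hγdef
  set β : ℝ := p1 * γ with hβdef
  have hγ0 : 0 < γ := div_pos (by linarith) hαpos
  have hβ0 : 0 < β := by positivity
  have hβ1 : β < 1 := by
    rw [hβdef, hγdef]
    rw [lt_div_iff₀ (by linarith : (0:ℝ) < α - 1)] at hp12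
    rw [← mul_div_assoc, div_lt_one hαpos]
    linarith
  haveI : Nonempty (Fin d) := ⟨⟨0, hd⟩⟩
  set Vb : ℝ := (volume (Metric.ball (0 : Fin d → ℝ) 1)).toReal with hVbdef
  have hVb : 0 ≤ Vb := ENNReal.toReal_nonneg
  set c2 : ℝ := 2^(1-β)/(1-β) * Vb with hc2def
  have hc2 : 0 ≤ c2 := by
    apply mul_nonneg _ hVb
    exact div_nonneg (Real.rpow_nonneg (by norm_num) _) (by linarith)
  set c1 : ℝ := c2 ^ (1/p1) with hc1def
  have hc1 : 0 ≤ c1 := Real.rpow_nonneg hc2 _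
  refine ⟨c1 + 1, by linarith, fun ψ hψ => ?_⟩
  set C : ℝ := c1 + 1 with hCdef
  have hC : 0 < C := by positivity
  set M : ℝ≥0∞ := ⨆ s > (0:ℝ), ENNReal.ofReal (s ^ ((α - 1)/α)) *
      ⨆ x : Fin d → ℝ, (‖ψ s x‖₊ : ℝ≥0∞) with hMdef
  rcases eq_or_ne M ⊤ with hM | hM
  · rw [hM, ENNReal.mul_top (by simp [hC.not_ge] : ENNReal.ofReal C ≠ 0)]
    exact le_top
  set K : ℝ := M.toReal with hKdef
  have hK : 0 ≤ K := ENNReal.toReal_nonneg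
  -- pointwise bound
  have hbound : ∀ s : ℝ, 0 < s → ∀ y : Fin d → ℝ, ‖ψ s y‖ ≤ K * s ^ (-γ) := by
    intro s hs y
    have h1 : ENNReal.ofReal (s ^ ((α-1)/α)) * (‖ψ s y‖₊ : ℝ≥0∞) ≤ M := by
      refine le_trans (mul_le_mul_right (le_iSup (fun y' => (‖ψ s y'‖₊ : ℝ≥0∞)) y) _) ?_
      exact le_iSup₂ (f := fun s (_ : s > 0) => ENNReal.ofReal (s ^ ((α - 1)/α)) *
        ⨆ x : Fin d → ℝ, (‖ψ s x‖₊ : ℝ≥0∞)) s hs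
    have h2 := ENNReal.toReal_mono hM h1
    rw [ENNReal.toReal_mul, ENNReal.toReal_ofReal (Real.rpow_nonneg hs.le _)] at h2
    simp only [ENNReal.coe_toReal, coe_nnnorm] at h2
    have h3 : ‖ψ s y‖ * s ^ γ ≤ K := by rw [mul_comm]; exact h2
    have h4 := (le_div_iff₀ (Real.rpow_pos_of_pos hs γ)).mpr h3
    rwa [div_eq_mul_inv, ← Real.rpow_neg hs.le] at h4
  refine iSup₂_le fun r hr => iSup₂_le fun t ht => iSup_le fun x => ?_
  -- notation
  set S : Set (ℝ × (Fin d → ℝ)) := {q : ℝ × (Fin d → ℝ) | |t - q.1| ^ (1/α) + ‖x - q.2‖ < r}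
    with hSdef
  have hrα : (0:ℝ) < r ^ α := Real.rpow_pos_of_pos hr α
  set a : ℝ := max 0 (t - r ^ α) with hadef
  set L : ℝ := 2 * r ^ α with hLdef
  have ha : 0 ≤ a := le_max_left _ _
  have hL : 0 < L := by positivity
  set B : Set (Fin d → ℝ) := Metric.ball x r with hBdef
  set T : Set (ℝ × (Fin d → ℝ)) := (Set.Ioo a (a+L)) ×ˢ B with hTdef
  have hT : MeasurableSet T := measurableSet_Ioo.prod Metric.isOpen_ball.measurableSet
  set c : ℝ≥0∞ := ENNReal.ofReal (K ^ p1) with hcdef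
  set g : ℝ × (Fin d → ℝ) → ℝ≥0∞ := fun q => c * (ENNReal.ofReal q.1) ^ (-β) with hgdef
  -- a.e. q.1 ≠ 0
  have hnull : (volume : Measure (ℝ × (Fin d → ℝ))) {q | q.1 = 0} = 0 := by
    have hset : {q : ℝ × (Fin d → ℝ) | q.1 = 0} = ({0} : Set ℝ) ×ˢ (Set.univ : Set (Fin d → ℝ)) := by
      ext ⟨s, y⟩; simp [Set.mem_prod, eq_comm]
    rw [hset, Measure.volume_eq_prod, Measure.prod_prod, Real.volume_singleton, zero_mul]
  have hae : ∀ᵐ q : ℝ × (Fin d → ℝ) ∂volume, q.1 ≠ 0 := by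
    rw [ae_iff]
    simpa using hnull
  -- S measurable
  have hScont : Continuous fun q : ℝ × (Fin d → ℝ) => |t - q.1| ^ (1/α) + ‖x - q.2‖ := by
    apply Continuous.add
    · exact (Real.continuous_rpow_const (by positivity)).comp
        ((continuous_const.sub continuous_fst).abs)
    · exact (continuous_const.sub continuous_snd).norm
  have hS : MeasurableSet S := (isOpen_lt hScont continuous_const).measurableSet
  -- step A
  have stepA : (∫⁻ q in S, ENNReal.ofReal (‖ψ q.1 q.2‖ ^ p1))
      ≤ ∫⁻ q in S, T.indicator g q := by
    apply lintegral_mono_ae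
    rw [ae_restrict_iff' hS]
    filter_upwards [hae] with q hq0 hqS
    rcases lt_trichotomy q.1 0 with h | h | h
    · rw [hψ q.1 h]
      simp [Real.zero_rpow hp1pos.ne']
    · exact absurd h hq0
    · -- q ∈ T
      have h1 : |t - q.1| ^ (1/α) < r :=
        lt_of_le_of_lt (le_add_of_nonneg_right (norm_nonneg _)) hqS
      have h2 : ‖x - q.2‖ < r :=
        lt_of_le_of_lt (le_add_of_nonneg_left (Real.rpow_nonneg (abs_nonneg _) _)) hqS
      have h3 : |t - q.1| < r ^ α := by
        have h4 := Real.rpow_lt_rpow (Real.rpow_nonneg (abs_nonneg _) _) h1 hαpos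
        rwa [← Real.rpow_mul (abs_nonneg _), one_div,
          inv_mul_cancel₀ (ne_of_gt hαpos), Real.rpow_one] at h4
      have h5 := abs_lt.mp h3
      have hqT : q ∈ T := by
        refine ⟨⟨max_lt h (by linarith [h5.2]), ?_⟩, ?_⟩
        · have : t - r ^ α ≤ a := le_max_right _ _
          rw [hLdef]; linarith [h5.1]
        · rw [hBdef, Metric.mem_ball, dist_eq_norm, ← norm_sub_rev]; exact h2
      rw [Set.indicator_of_mem hqT]
      have hb := hbound q.1 h q.2
      calc ENNReal.ofReal (‖ψ q.1 q.2‖ ^ p1)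
          ≤ ENNReal.ofReal ((K * q.1 ^ (-γ)) ^ p1) :=
            ENNReal.ofReal_le_ofReal (Real.rpow_le_rpow (norm_nonneg _) hb hp1pos.le)
        _ = ENNReal.ofReal (K ^ p1 * q.1 ^ (-β)) := by
            rw [Real.mul_rpow hK (Real.rpow_nonneg h.le _), ← Real.rpow_mul h.le]
            congr 2
            rw [hβdef]; ring
        _ = c * (ENNReal.ofReal q.1) ^ (-β) := by
            rw [ENNReal.ofReal_mul (Real.rpow_nonneg hK _), hcdef,
              ENNReal.ofReal_rpow_of_pos h]
  -- assemble integral bound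
  set W : ℝ := K ^ p1 * (L ^ (1-β)/(1-β)) * (r ^ (d:ℝ) * Vb) with hWdef
  have hW0 : 0 ≤ W := by
    apply mul_nonneg (mul_nonneg (Real.rpow_nonneg hK _) _)
      (mul_nonneg (Real.rpow_nonneg hr.le _) hVb)
    apply div_nonneg (Real.rpow_nonneg hL.le _) (by linarith)
  have hmeasg1 : Measurable fun s : ℝ => c * (ENNReal.ofReal s) ^ (-β) :=
    measurable_const.mul (ENNReal.continuous_rpow_const.measurable.comp
      ENNReal.measurable_ofReal)
  have hfin : volume (Metric.ball (0 : Fin d → ℝ) 1) ≠ ⊤ :=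
    (measure_ball_lt_top (x := (0 : Fin d → ℝ)) (r := 1)).ne
  have hvolB : volume B = ENNReal.ofReal (r ^ (d:ℝ) * Vb) := by
    rw [hBdef, Measure.addHaar_ball volume x hr.le, Module.finrank_fin_fun,
      ← Real.rpow_natCast r d, ← ENNReal.ofReal_toReal hfin, ← hVbdef,
      ← ENNReal.ofReal_mul (Real.rpow_nonneg hr.le _)]
  have hIntBound : (∫⁻ q in S, ENNReal.ofReal (‖ψ q.1 q.2‖ ^ p1)) ≤ ENNReal.ofReal W := by
    calc (∫⁻ q in S, ENNReal.ofReal (‖ψ q.1 q.2‖ ^ p1))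
        ≤ ∫⁻ q in S, T.indicator g q := stepA
      _ ≤ ∫⁻ q, T.indicator g q := setLIntegral_le_lintegral _ _
      _ = ∫⁻ q in T, g q := lintegral_indicator hT g
      _ = (∫⁻ s in Set.Ioo a (a+L), c * (ENNReal.ofReal s) ^ (-β)) * volume B :=
          aux_prod _ hmeasg1 _ _
      _ = c * (∫⁻ s in Set.Ioo a (a+L), (ENNReal.ofReal s) ^ (-β)) * volume B := by
          rw [lintegral_const_mul' c _ ENNReal.ofReal_ne_top]
      _ ≤ c * ENNReal.ofReal (L ^ (1-β)/(1-β)) * ENNReal.ofReal (r ^ (d:ℝ) * Vb) := by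
          rw [hvolB]
          exact mul_le_mul' (mul_le_mul_right (aux_shift a L hβ0 hβ1 ha hL) c) le_rfl
      _ = ENNReal.ofReal W := by
          rw [hcdef, ← ENNReal.ofReal_mul (Real.rpow_nonneg hK _),
            ← ENNReal.ofReal_mul (mul_nonneg (Real.rpow_nonneg hK _) (div_nonneg (Real.rpow_nonneg hL.le _) (by linarith)))]
  -- real exponent computation
  set e : ℝ := -((d : ℝ) + α) * (1/p1 - (α - 1)/((d : ℝ) + α)) with hedef
  have hdα : (0:ℝ) < (d:ℝ) + α := by have : (0:ℝ) ≤ (d:ℝ) := Nat.cast_nonneg d; linarith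
  have hexp : e + (α*(1-β)+(d:ℝ)) * (1/p1) = 0 := by
    rw [hedef, hβdef, hγdef]
    field_simp
    ring
  have hWsplit : W = K ^ p1 * c2 * r ^ (α*(1-β)+(d:ℝ)) := by
    have h2 : (2*(r^α)) ^ (1-β) = 2 ^ (1-β) * r ^ (α*(1-β)) := by
      rw [Real.mul_rpow (by norm_num) (Real.rpow_nonneg hr.le _), ← Real.rpow_mul hr.le]
    rw [hWdef, hLdef, h2, Real.rpow_add hr (α*(1-β)) (d:ℝ), hc2def]
    ring
  have hWr : W ^ (1/p1) = K * c1 * r ^ ((α*(1-β)+(d:ℝ)) * (1/p1)) := by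
    rw [hWsplit, Real.mul_rpow (mul_nonneg (Real.rpow_nonneg hK _) hc2)
        (Real.rpow_nonneg hr.le _),
      Real.mul_rpow (Real.rpow_nonneg hK _) hc2,
      ← Real.rpow_mul hK, mul_one_div_cancel hp1pos.ne', Real.rpow_one,
      ← Real.rpow_mul hr.le, hc1def]
  have hfinal : r ^ e * W ^ (1/p1) = K * c1 := by
    rw [hWr, show r ^ e * (K * c1 * r ^ ((α*(1-β)+(d:ℝ)) * (1/p1)))
        = K * c1 * (r ^ e * r ^ ((α*(1-β)+(d:ℝ)) * (1/p1))) from by ring,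
      ← Real.rpow_add hr, hexp, Real.rpow_zero, mul_one]
  -- final chain
  calc ENNReal.ofReal (r ^ e) * (∫⁻ q in S, ENNReal.ofReal (‖ψ q.1 q.2‖ ^ p1)) ^ (1/p1)
      ≤ ENNReal.ofReal (r ^ e) * (ENNReal.ofReal W) ^ (1/p1) :=
        mul_le_mul_right (ENNReal.rpow_le_rpow hIntBound (one_div_nonneg.mpr hp1pos.le)) _
    _ = ENNReal.ofReal (r ^ e) * ENNReal.ofReal (W ^ (1/p1)) := by
        rw [ENNReal.ofReal_rpow_of_nonneg hW0 (one_div_nonneg.mpr hp1pos.le)]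
    _ = ENNReal.ofReal (r ^ e * W ^ (1/p1)) :=
        (ENNReal.ofReal_mul (Real.rpow_nonneg hr.le _)).symm
    _ ≤ ENNReal.ofReal (C * K) := by
        apply ENNReal.ofReal_le_ofReal
        rw [hfinal, hCdef]
        nlinarith [hK, hc1]
    _ = ENNReal.ofReal C * ENNReal.ofReal K := ENNReal.ofReal_mul hC.le
    _ = ENNReal.ofReal C * M := by rw [hKdef, ENNReal.ofReal_toReal hM]
end

section
/- Suppose $\vec{u}:[0,\infty)\times\mathbb{R}^d\to\mathbb{R}^d$ satisfies $\|\vec{u}\|_{L^\infty_\alpha}=\sup_{t>0}t^{\frac{\alpha-1}{\alpha}}\|\vec u(t,\cdot)\|_\infty<\infty$ and the bilinear operator $B(\vec u,\vec v)(t,x)$ satisfies the pointwise bound $|B(\vec u,\vec v)(t,x)|\le C_0\int_0^t\int_{\mathbb{R}^d}\frac{|\vec u(s,y)||\vec v(s,y)|}{(|t-s|^{1/\alpha}+|x-y|)^{d+1}}dy\,ds$. Then $\|B(\vec u,\vec v)\|_{L^\infty_\alpha}\le C\|\vec u\|_{L^\infty_\alpha}\|\vec v\|_{L^\infty_\alpha}$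 for some constant $C=C(C_0,d,\alpha)$, provided $1<\alpha<2$. -/
/-!
Bound `‖u s y‖ ‖v s y‖ ≤ ‖u‖ ‖v‖ s^{-2p}` with `p = (α - 1) / α`. The space integral of the kernel
is then scale invariant, `∫ (a + ‖x - y‖)^{-(d+1)} dy = c_d a⁻¹` with `a = (t - s)^{1/α}`, and what
remains is the Beta-type integral `∫₀ᵗ s^{-b} (t - s)^{-c} ds ≲ t^{1-b-c}` with `b = 2p` and
`c = 1/α`. Both exponents lie in `[0, 1)` exactly because `1 < α < 2`, and `1 - b - c = -p` is
the critical decay.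
-/

open MeasureTheory ENNReal

section WeightedSupNorm

variable {E F : Type*} [SeminormedAddGroup F] {p : ℝ}

/-- `weightedSupNorm ((α - 1) / α) u` is the norm `‖u‖_{L^∞_α}`. -/
noncomputable def weightedSupNorm (p : ℝ) (u : ℝ → E → F) : ℝ≥0∞ :=
  ⨆ t > (0:ℝ), ENNReal.ofReal (t ^ p) * ⨆ x : E, (‖u t x‖₊ : ℝ≥0∞)

lemma ofReal_rpow_mul_nnnorm_le_weightedSupNorm (u : ℝ → E → F) {t : ℝ} (ht : 0 < t) (x : E) :
    ENNReal.ofReal (t ^ p) * ‖u t x‖₊ ≤ weightedSupNorm p u :=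
  le_iSup₂_of_le (f := fun t (_ : t > 0) => ENNReal.ofReal (t ^ p) * ⨆ x : E, (‖u t x‖₊ : ℝ≥0∞))
    t ht (by gcongr; exact le_iSup (fun x => (‖u t x‖₊ : ℝ≥0∞)) x)

-- Only the product is assumed finite, which also covers `⊤ * 0`.
lemma norm_mul_norm_le_of_weightedSupNorm_mul_ne_top {u v : ℝ → E → F}
    (h : weightedSupNorm p u * weightedSupNorm p v ≠ ⊤) {s : ℝ} (hs : 0 < s) (y : E) :
    ‖u s y‖ * ‖v s y‖ ≤ (weightedSupNorm p u * weightedSupNorm p v).toReal * s ^ (-(2 * p)) := by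
  have hsp : 0 < s ^ p := Real.rpow_pos_of_pos hs p
  have hprod := mul_le_mul' (ofReal_rpow_mul_nnnorm_le_weightedSupNorm (p := p) u hs y)
    (ofReal_rpow_mul_nnnorm_le_weightedSupNorm (p := p) v hs y)
  rw [← ENNReal.ofReal_coe_nnreal, ← ENNReal.ofReal_coe_nnreal, coe_nnnorm, coe_nnnorm,
    ← ENNReal.ofReal_mul hsp.le, ← ENNReal.ofReal_mul hsp.le,
    ← ENNReal.ofReal_mul (by positivity)] at hprod
  have hreal := (ENNReal.ofReal_le_iff_le_toReal h).1 hprod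
  rw [two_mul, neg_add, Real.rpow_add hs, Real.rpow_neg hs.le]
  calc ‖u s y‖ * ‖v s y‖ = s ^ p * ‖u s y‖ * (s ^ p * ‖v s y‖) * ((s ^ p)⁻¹ * (s ^ p)⁻¹) := by
        field_simp
    _ ≤ _ := by gcongr

lemma weightedSupNorm_le_ofReal {w : ℝ → E → F} {M : ℝ}
    (h : ∀ t > 0, ∀ x, ‖w t x‖ ≤ M * t ^ (-p)) : weightedSupNorm p w ≤ ENNReal.ofReal M := by
  refine iSup₂_le fun t ht => ?_
  rw [ENNReal.mul_iSup]
  refine iSup_le fun x => ?_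
  rw [← ENNReal.ofReal_coe_nnreal, coe_nnnorm, ← ENNReal.ofReal_mul (by positivity)]
  refine ENNReal.ofReal_le_ofReal ?_
  calc t ^ p * ‖w t x‖ ≤ t ^ p * (M * t ^ (-p)) := by gcongr; exact h t ht x
    _ = M := by rw [mul_left_comm, ← Real.rpow_add ht, add_neg_cancel, Real.rpow_zero, mul_one]

end WeightedSupNorm

section Kernel

lemma add_norm_rpow_neg_eq {E : Type*} [NormedAddCommGroup E] [NormedSpace ℝ E] {a : ℝ}
    (ha : 0 < a) (r : ℝ) (z : E) :
    (a + ‖z‖) ^ (-r) = a ^ (-r) * (1 + ‖a⁻¹ • z‖) ^ (-r) := by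
  rw [norm_smul, Real.norm_of_nonneg (inv_nonneg.2 ha.le), ← Real.mul_rpow ha.le (by positivity),
    mul_add, mul_one, ← mul_assoc, mul_inv_cancel₀ ha.ne', one_mul]

variable {E : Type*} [NormedAddCommGroup E] [NormedSpace ℝ E] [FiniteDimensional ℝ E]
  [MeasurableSpace E] [BorelSpace E] (μ : Measure E) [μ.IsAddHaarMeasure] {a r : ℝ}

lemma integrable_add_norm_sub_rpow_neg (hr : (Module.finrank ℝ E : ℝ) < r) (ha : 0 < a)
    (x : E) : Integrable (fun y => (a + ‖x - y‖) ^ (-r)) μ := by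
  have hscaled : Integrable (fun z : E => (1 + ‖a⁻¹ • z‖) ^ (-r)) μ :=
    (integrable_comp_smul_iff μ (fun z : E => (1 + ‖z‖) ^ (-r)) (inv_ne_zero ha.ne')).2
      (integrable_one_add_norm hr)
  simpa only [add_norm_rpow_neg_eq ha] using (hscaled.comp_sub_left x).const_mul (a ^ (-r))

lemma integral_add_norm_sub_rpow_neg (ha : 0 < a) (r : ℝ) (x : E) :
    ∫ y, (a + ‖x - y‖) ^ (-r) ∂μ =
      a ^ ((Module.finrank ℝ E : ℝ) - r) * ∫ z, (1 + ‖z‖) ^ (-r) ∂μ := by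
  simp only [add_norm_rpow_neg_eq ha, integral_const_mul]
  rw [integral_sub_left_eq_self (fun z => (1 + ‖a⁻¹ • z‖) ^ (-r)) μ x,
    Measure.integral_comp_inv_smul_of_nonneg μ (fun z => (1 + ‖z‖) ^ (-r)) ha.le, smul_eq_mul,
    ← mul_assoc, ← Real.rpow_natCast, ← Real.rpow_add ha, neg_add_eq_sub]

lemma integral_one_add_norm_rpow_neg_pos (hr : (Module.finrank ℝ E : ℝ) < r) :
    0 < ∫ z, (1 + ‖z‖) ^ (-r) ∂μ := by
  refine (integral_pos_iff_support_of_nonneg (fun z => by positivity)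
    (integrable_one_add_norm hr)).2 ?_
  rw [Function.support_eq_univ fun z => (Real.rpow_pos_of_pos (by positivity) _).ne']
  exact Measure.measure_univ_pos.2 (NeZero.ne μ)

end Kernel

section Beta

variable {s t b c : ℝ}

lemma integrableOn_Ioo_rpow_neg (hb : b < 1) :
    IntegrableOn (fun s : ℝ => s ^ (-b)) (Set.Ioo 0 t) := by
  rcases le_total t 0 with ht | ht
  · simp [Set.Ioo_eq_empty_of_le ht]
  exact ((intervalIntegrable_iff_integrableOn_Ioo_of_le ht).1
    (intervalIntegral.intervalIntegrable_rpow' (by linarith)))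

lemma setIntegral_Ioo_rpow_neg (ht : 0 ≤ t) (hb : b < 1) :
    ∫ s in Set.Ioo 0 t, s ^ (-b) = t ^ (1 - b) / (1 - b) := by
  rw [← integral_Ioc_eq_integral_Ioo, ← intervalIntegral.integral_of_le ht,
    integral_rpow (Or.inl (by linarith)), Real.zero_rpow (by linarith), sub_zero, neg_add_eq_sub]

lemma integrableOn_Ioo_sub_rpow_neg (hc : c < 1) :
    IntegrableOn (fun s : ℝ => (t - s) ^ (-c)) (Set.Ioo 0 t) := by
  rcases le_total t 0 with ht | ht
  · simp [Set.Ioo_eq_empty_of_le ht]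
  have h := ((intervalIntegral.intervalIntegrable_rpow' (a := 0) (b := t) (r := -c)
    (by linarith)).comp_sub_left t).symm
  rw [sub_zero, sub_self] at h
  exact (intervalIntegrable_iff_integrableOn_Ioo_of_le ht).1 h

lemma setIntegral_Ioo_sub_rpow_neg (ht : 0 ≤ t) (hc : c < 1) :
    ∫ s in Set.Ioo 0 t, (t - s) ^ (-c) = t ^ (1 - c) / (1 - c) := by
  rw [← integral_Ioc_eq_integral_Ioo, ← intervalIntegral.integral_of_le ht,
    intervalIntegral.integral_comp_sub_left (fun s => s ^ (-c)), sub_self, sub_zero,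
    intervalIntegral.integral_of_le ht, integral_Ioc_eq_integral_Ioo,
    setIntegral_Ioo_rpow_neg ht hc]

lemma rpow_neg_mul_sub_rpow_neg_le (hb : 0 ≤ b) (hc : 0 ≤ c) (hs : s ∈ Set.Ioo 0 t) :
    s ^ (-b) * (t - s) ^ (-c) ≤ (t / 2) ^ (-c) * s ^ (-b) + (t / 2) ^ (-b) * (t - s) ^ (-c) := by
  obtain ⟨hs0, hst⟩ := hs
  have hts : 0 < t - s := by linarith
  rcases le_total s (t / 2) with hs2 | hs2
  · have : (t - s) ^ (-c) ≤ (t / 2) ^ (-c) :=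
      Real.rpow_le_rpow_of_nonpos (by linarith) (by linarith) (by linarith)
    nlinarith [Real.rpow_nonneg hs0.le (-b), Real.rpow_nonneg (by linarith : 0 ≤ t / 2) (-b),
      Real.rpow_nonneg hts.le (-c)]
  · have : s ^ (-b) ≤ (t / 2) ^ (-b) :=
      Real.rpow_le_rpow_of_nonpos (by linarith) hs2 (by linarith)
    nlinarith [Real.rpow_nonneg hs0.le (-b), Real.rpow_nonneg (by linarith : 0 ≤ t / 2) (-c),
      Real.rpow_nonneg hts.le (-c)]

lemma integrableOn_rpow_neg_mul_sub_rpow_neg (hb0 : 0 ≤ b) (hb1 : b < 1) (hc0 : 0 ≤ c)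
    (hc1 : c < 1) : IntegrableOn (fun s => s ^ (-b) * (t - s) ^ (-c)) (Set.Ioo 0 t) := by
  refine Integrable.mono' (((integrableOn_Ioo_rpow_neg hb1).const_mul ((t / 2) ^ (-c))).add
    ((integrableOn_Ioo_sub_rpow_neg hc1).const_mul ((t / 2) ^ (-b)))) (by fun_prop) ?_
  refine (ae_restrict_iff' measurableSet_Ioo).2 (ae_of_all _ fun s hs => ?_)
  rw [Real.norm_of_nonneg (mul_nonneg (Real.rpow_nonneg hs.1.le _)
    (Real.rpow_nonneg (sub_nonneg.2 hs.2.le) _))]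
  exact rpow_neg_mul_sub_rpow_neg_le hb0 hc0 hs

lemma half_rpow_neg_mul_rpow (ht : 0 < t) (b c : ℝ) :
    (t / 2) ^ (-c) * t ^ (1 - b) = 2 ^ c * t ^ (1 - b - c) := by
  rw [Real.div_rpow ht.le zero_le_two, Real.rpow_neg zero_le_two, div_inv_eq_mul, mul_right_comm,
    ← Real.rpow_add ht, mul_comm]
  ring_nf

lemma setIntegral_rpow_neg_mul_sub_rpow_neg_le (ht : 0 < t) (hb0 : 0 ≤ b) (hb1 : b < 1)
    (hc0 : 0 ≤ c) (hc1 : c < 1) :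
    ∫ s in Set.Ioo 0 t, s ^ (-b) * (t - s) ^ (-c) ≤
      (2 ^ c / (1 - b) + 2 ^ b / (1 - c)) * t ^ (1 - b - c) :=
  calc ∫ s in Set.Ioo 0 t, s ^ (-b) * (t - s) ^ (-c)
      ≤ ∫ s in Set.Ioo 0 t, ((t / 2) ^ (-c) * s ^ (-b) + (t / 2) ^ (-b) * (t - s) ^ (-c)) :=
        setIntegral_mono_on (integrableOn_rpow_neg_mul_sub_rpow_neg hb0 hb1 hc0 hc1)
          (((integrableOn_Ioo_rpow_neg hb1).const_mul _).add
            ((integrableOn_Ioo_sub_rpow_neg hc1).const_mul _))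
          measurableSet_Ioo fun s hs => rpow_neg_mul_sub_rpow_neg_le hb0 hc0 hs
    _ = (t / 2) ^ (-c) * (t ^ (1 - b) / (1 - b)) + (t / 2) ^ (-b) * (t ^ (1 - c) / (1 - c)) := by
        rw [integral_add ((integrableOn_Ioo_rpow_neg hb1).const_mul _)
          ((integrableOn_Ioo_sub_rpow_neg hc1).const_mul _), integral_const_mul,
          integral_const_mul, setIntegral_Ioo_rpow_neg ht.le hb1,
          setIntegral_Ioo_sub_rpow_neg ht.le hc1]
    _ = (2 ^ c / (1 - b) + 2 ^ b / (1 - c)) * t ^ (1 - b - c) := by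
        rw [mul_div_assoc', mul_div_assoc', half_rpow_neg_mul_rpow ht, half_rpow_neg_mul_rpow ht,
          sub_right_comm 1 c b]
        ring

end Beta

section Duhamel

variable {E : Type*} [NormedAddCommGroup E] [NormedSpace ℝ E] [FiniteDimensional ℝ E]
  [MeasurableSpace E] [BorelSpace E] (μ : Measure E) [μ.IsAddHaarMeasure]

lemma setIntegral_integral_div_add_norm_rpow_le {f : ℝ → E → ℝ} {M t b c : ℝ}
    (hf0 : ∀ s y, 0 ≤ f s y) (hf : ∀ s > 0, ∀ y, f s y ≤ M * s ^ (-b)) (ht : 0 < t)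
    (hb0 : 0 ≤ b) (hb1 : b < 1) (hc0 : 0 ≤ c) (hc1 : c < 1) (x : E) :
    ∫ s in Set.Ioo 0 t, ∫ y, f s y / ((t - s) ^ c + ‖x - y‖) ^ ((Module.finrank ℝ E : ℝ) + 1) ∂μ
      ≤ M * (∫ z, (1 + ‖z‖) ^ (-((Module.finrank ℝ E : ℝ) + 1)) ∂μ) *
          ((2 ^ c / (1 - b) + 2 ^ b / (1 - c)) * t ^ (1 - b - c)) := by
  set r : ℝ := (Module.finrank ℝ E : ℝ) + 1
  set cr := ∫ z, (1 + ‖z‖) ^ (-r) ∂μ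
  have hM : 0 ≤ M := nonneg_of_mul_nonneg_left ((hf0 t x).trans (hf t ht x))
    (Real.rpow_pos_of_pos ht _)
  have hcr : 0 ≤ cr := (integral_one_add_norm_rpow_neg_pos μ (by simp [r])).le
  have hspace : ∀ s ∈ Set.Ioo 0 t, ∫ y, f s y / ((t - s) ^ c + ‖x - y‖) ^ r ∂μ ≤
      M * cr * (s ^ (-b) * (t - s) ^ (-c)) := by
    rintro s ⟨hs0, hst⟩
    have ha : 0 < (t - s) ^ c := Real.rpow_pos_of_pos (sub_pos.2 hst) c
    calc ∫ y, f s y / ((t - s) ^ c + ‖x - y‖) ^ r ∂μ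
        ≤ ∫ y, M * s ^ (-b) * ((t - s) ^ c + ‖x - y‖) ^ (-r) ∂μ := by
          refine integral_mono_of_nonneg
            (ae_of_all _ fun y => div_nonneg (hf0 s y) (by positivity))
            ((integrable_add_norm_sub_rpow_neg μ (by simp [r]) ha x).const_mul _)
            (ae_of_all _ fun y => ?_)
          have hX : 0 < (t - s) ^ c + ‖x - y‖ := by positivity
          simp only [Real.rpow_neg hX.le, ← div_eq_mul_inv]
          gcongr
          exact hf s hs0 y
      _ = M * cr * (s ^ (-b) * (t - s) ^ (-c)) := by
          rw [integral_const_mul, integral_add_norm_sub_rpow_neg μ ha, ← Real.rpow_mul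
            (sub_pos.2 hst).le, show c * ((Module.finrank ℝ E : ℝ) - r) = -c by ring]
          ring
  calc ∫ s in Set.Ioo 0 t, ∫ y, f s y / ((t - s) ^ c + ‖x - y‖) ^ r ∂μ
      ≤ ∫ s in Set.Ioo 0 t, M * cr * (s ^ (-b) * (t - s) ^ (-c)) :=
        integral_mono_of_nonneg ((ae_restrict_iff' measurableSet_Ioo).2 (ae_of_all _
          fun s hs => integral_nonneg fun y => div_nonneg (hf0 s y)
            (Real.rpow_nonneg (by have := Real.rpow_pos_of_pos (sub_pos.2 hs.2) c; positivity) _)))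
          ((integrableOn_rpow_neg_mul_sub_rpow_neg hb0 hb1 hc0 hc1).const_mul _)
          ((ae_restrict_iff' measurableSet_Ioo).2 (ae_of_all _ hspace))
    _ = M * cr * ∫ s in Set.Ioo 0 t, s ^ (-b) * (t - s) ^ (-c) := integral_const_mul _ _
    _ ≤ M * cr * ((2 ^ c / (1 - b) + 2 ^ b / (1 - c)) * t ^ (1 - b - c)) := by
        gcongr
        exact setIntegral_rpow_neg_mul_sub_rpow_neg_le ht hb0 hb1 hc0 hc1

end Duhamel

/-- Boundedness of the Duhamel bilinear term in the critical weighted space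
`L^∞_α`, assuming the Oseen-type pointwise kernel bound for
`𝔭_{t-s} ∗ ℙ div`. -/
theorem stmt_11 (d : ℕ) (α : ℝ) (hα : 1 < α ∧ α < 2) (C0 : ℝ) (hC0 : 0 < C0) :
    ∃ C > (0:ℝ), ∀ u v B : ℝ → (Fin d → ℝ) → (Fin d → ℝ),
      (⨆ t > (0:ℝ), ENNReal.ofReal (t ^ ((α - 1)/α)) *
          ⨆ x : Fin d → ℝ, (‖u t x‖₊ : ℝ≥0∞)) < ⊤ →
      (∀ t > (0:ℝ), ∀ x : Fin d → ℝ,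
        ‖B t x‖ ≤ C0 * ∫ s in Set.Ioo (0:ℝ) t, ∫ y : Fin d → ℝ,
          ‖u s y‖ * ‖v s y‖ / (((t - s) ^ (1/α) + ‖x - y‖) ^ ((d : ℝ) + 1))) →
      (⨆ t > (0:ℝ), ENNReal.ofReal (t ^ ((α - 1)/α)) *
          ⨆ x : Fin d → ℝ, (‖B t x‖₊ : ℝ≥0∞))
        ≤ ENNReal.ofReal C *
            (⨆ t > (0:ℝ), ENNReal.ofReal (t ^ ((α - 1)/α)) *
              ⨆ x : Fin d → ℝ, (‖u t x‖₊ : ℝ≥0∞)) *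
            (⨆ t > (0:ℝ), ENNReal.ofReal (t ^ ((α - 1)/α)) *
              ⨆ x : Fin d → ℝ, (‖v t x‖₊ : ℝ≥0∞)) := by
  obtain ⟨hα1, hα2⟩ := hα
  set p := (α - 1) / α
  have hα0 : 0 < α := by linarith
  have hb0 : 0 ≤ 2 * p := by positivity
  have hb1 : 2 * p < 1 := by rw [← mul_div_assoc, div_lt_one hα0]; linarith
  have hc0 : 0 ≤ 1 / α := by positivity
  have hc1 : 1 / α < 1 := by rwa [div_lt_one hα0]
  have hexp : 1 - 2 * p - 1 / α = -p := by simp only [p]; field_simp; ring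
  have hdim : ((Module.finrank ℝ (Fin d → ℝ) : ℕ) : ℝ) = d := by rw [Module.finrank_fin_fun]
  set cd := ∫ z : Fin d → ℝ, (1 + ‖z‖) ^ (-((d : ℝ) + 1))
  have hcd : 0 < cd := by
    simpa only [hdim] using integral_one_add_norm_rpow_neg_pos (volume : Measure (Fin d → ℝ))
      (r := (d : ℝ) + 1) (by simp)
  set K := 2 ^ (1 / α) / (1 - 2 * p) + 2 ^ (2 * p) / (1 - 1 / α)
  have hK : 0 < K := by have := sub_pos.2 hb1; have := sub_pos.2 hc1; positivity
  refine ⟨C0 * cd * K, by positivity, fun u v B _ hB => ?_⟩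
  change weightedSupNorm p B ≤ _ * weightedSupNorm p u * weightedSupNorm p v
  rw [mul_assoc]
  by_cases htop : weightedSupNorm p u * weightedSupNorm p v = ⊤
  · rw [htop, ENNReal.mul_top (by positivity)]
    exact le_top
  rw [← ENNReal.ofReal_toReal htop, ← ENNReal.ofReal_mul (by positivity)]
  refine weightedSupNorm_le_ofReal fun t ht x => (hB t ht x).trans ?_
  have hint := setIntegral_integral_div_add_norm_rpow_le volume (fun _ _ => by positivity)
    (fun s hs y => norm_mul_norm_le_of_weightedSupNorm_mul_ne_top htop hs y) ht hb0 hb1 hc0 hc1 x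
  rw [hdim, hexp] at hint
  exact (mul_le_mul_of_nonneg_left hint hC0.le).trans_eq (by ring)
end

section
/- Let $d=3$, $\alpha=\frac{3}{2}$ and $g(t,x)=t^{-2/5}|\cos(e_0\cdot x)|$ with $|e_0|=1$. Then $g\notin\mathcal{M}^{1,9/2}_\alpha$, i.e. $\sup_{r>0}\sup_{(t,x)} r^{-7/2}\iint_{\{|t-s|^{2/3}+|x-y|<r\}} g(s,y)\,dy\,ds=+\infty$. More precisely, for each $r>0$, $r^{-7/2}\int_{|s|<r^{3/2}}|s|^{-2/5}ds\cdot\int_{|y|<r}|\cos(e_0\cdot y)|\,dy \ge c\, r^{2/5}$ for $r$ large, so the supremum over $r>0$ diverges. -/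
/-!
On the parabolic ball of radius `2 r` about the origin, which contains the cylinder
`(-r^{3/2}, r^{3/2}) × B(0, r)`, the function `g` factorises. The time factor is
`∫_{|s|<r^{3/2}} |s|^{-2/5} ds ≥ r^{9/10}`. The space factor is `≳ r^3`: the translates of
`|cos ⟪e₀, ·⟫|` by `±(π/4) e₀` add up to `|cos| + |sin| ≥ 1`, and both translates of the ball
`B(0, r - π/4)` lie in `B(0, r)`. Hence the Morrey quotient is `≳ r^{9/10 + 3 - 7/2} = r^{2/5}`.
-/

open MeasureTheory ENNReal RealInnerProductSpace Real Metric Set Filter Module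

theorem one_le_abs_cos_add_abs_sin (u : ℝ) : 1 ≤ |cos u| + |sin u| := by
  have hsq : ∀ x : ℝ, |x| ≤ 1 → x ^ 2 ≤ |x| := fun x hx => by
    rw [← sq_abs]
    nlinarith [abs_nonneg x]
  linarith [cos_sq_add_sin_sq u, hsq _ (abs_cos_le_one u), hsq _ (abs_sin_le_one u)]

section Translation

variable {E : Type*} [NormedAddCommGroup E] [MeasurableSpace E] [BorelSpace E]
  (μ : Measure E) [μ.IsAddRightInvariant]

theorem setIntegral_ball_comp_add_right (f : E → ℝ) (a : E) (ρ : ℝ) :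
    ∫ z in ball 0 ρ, f (z + a) ∂μ = ∫ y in ball a ρ, f y ∂μ := by
  have hpre : (· + a) ⁻¹' ball a ρ = ball (0 : E) ρ := by
    ext z; simp [dist_eq_norm]
  rw [← hpre]
  exact (measurePreserving_add_right μ a).setIntegral_preimage_emb
    (measurableEmbedding_addRight a) f _

theorem setIntegral_ball_comp_add_right_le {f : E → ℝ} (hf0 : 0 ≤ f) {r : ℝ}
    (hf : IntegrableOn f (ball 0 r) μ) {a : E} {ρ : ℝ} (h : ‖a‖ + ρ ≤ r) :
    ∫ z in ball 0 ρ, f (z + a) ∂μ ≤ ∫ y in ball 0 r, f y ∂μ := by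
  rw [setIntegral_ball_comp_add_right]
  refine setIntegral_mono_set hf (ae_of_all _ fun y => hf0 y) (ball_subset_ball' ?_).eventuallyLE
  simpa [add_comm] using h

end Translation

section AbsCos

variable {E : Type*} [NormedAddCommGroup E] [InnerProductSpace ℝ E] [FiniteDimensional ℝ E]
  [MeasurableSpace E] [BorelSpace E] (μ : Measure E) [μ.IsAddHaarMeasure]

theorem measureReal_ball_le_two_mul_setIntegral_abs_cos {e : E} (he : ‖e‖ = 1) (r : ℝ) :
    μ.real (ball 0 (r - π / 4)) ≤ 2 * ∫ y in ball 0 r, |cos ⟪e, y⟫| ∂μ := by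
  set f : E → ℝ := fun y => |cos ⟪e, y⟫|
  have hf : Continuous f := by fun_prop
  have hfi : ∀ (a : E) (s : ℝ), IntegrableOn (fun z => f (z + a)) (ball 0 s) μ := fun a s =>
    ((hf.comp (continuous_add_const a)).locallyIntegrable.integrableOn_isCompact
      (isCompact_closedBall 0 s)).mono_set ball_subset_closedBall
  set a : E := (π / 4) • e
  have hshift : ∀ b : E, ‖b‖ = π / 4 →
      ∫ z in ball 0 (r - π / 4), f (z + b) ∂μ ≤ ∫ y in ball 0 r, f y ∂μ := fun b hb =>
    setIntegral_ball_comp_add_right_le μ (ρ := r - π / 4) (fun y => abs_nonneg _)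
      (by simpa using hfi 0 r) (by rw [hb]; linarith)
  have hpt : ∀ z : E, 1 ≤ f (z + a) + f (z + -a) := fun z => by
    have h1 : ⟪e, z + a⟫ = ⟪e, z⟫ + π / 4 := by
      simp [a, inner_add_right, real_inner_smul_right, he]
    have h2 : ⟪e, z + -a⟫ = (⟪e, z⟫ + π / 4) - π / 2 := by
      simp [a, inner_add_right, real_inner_smul_right, he]; ring
    simpa [f, h1, h2, cos_sub_pi_div_two] using one_le_abs_cos_add_abs_sin (⟪e, z⟫ + π / 4)
  have hna : ‖a‖ = π / 4 := by simp [a, norm_smul, he, abs_of_pos pi_pos]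
  calc μ.real (ball 0 (r - π / 4)) = ∫ _ in ball (0 : E) (r - π / 4), (1 : ℝ) ∂μ := by simp
    _ ≤ ∫ z in ball 0 (r - π / 4), (f (z + a) + f (z + -a)) ∂μ :=
      setIntegral_mono_on (integrableOn_const measure_ball_lt_top.ne) ((hfi _ _).add (hfi _ _))
        measurableSet_ball fun z _ => hpt z
    _ = (∫ z in ball 0 (r - π / 4), f (z + a) ∂μ) + ∫ z in ball 0 (r - π / 4), f (z + -a) ∂μ :=
      integral_add (hfi _ _) (hfi _ _)
    _ ≤ 2 * ∫ y in ball 0 r, f y ∂μ := by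
      linarith [hshift a hna, hshift (-a) (by rw [norm_neg, hna])]

theorem pow_finrank_mul_le_setIntegral_abs_cos {e : E} (he : ‖e‖ = 1) {r : ℝ} (hr : 1 ≤ r) :
    μ.real (ball 0 1) / (2 * 5 ^ finrank ℝ E) * r ^ finrank ℝ E ≤
      ∫ y in ball 0 r, |cos ⟪e, y⟫| ∂μ := by
  have hρ : r / 5 ≤ r - π / 4 := by linarith [pi_lt_d2]
  have hvol : μ.real (ball 0 (r - π / 4)) = (r - π / 4) ^ finrank ℝ E * μ.real (ball 0 1) := by
    rw [measureReal_def, Measure.addHaar_ball_of_pos μ 0 (by linarith), ENNReal.toReal_mul,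
      ENNReal.toReal_ofReal (pow_nonneg (by linarith) _), measureReal_def]
  have hhalf := measureReal_ball_le_two_mul_setIntegral_abs_cos μ he r
  rw [hvol] at hhalf
  calc μ.real (ball 0 1) / (2 * 5 ^ finrank ℝ E) * r ^ finrank ℝ E
      = (r / 5) ^ finrank ℝ E * μ.real (ball 0 1) / 2 := by rw [div_pow]; ring
    _ ≤ (r - π / 4) ^ finrank ℝ E * μ.real (ball 0 1) / 2 := by gcongr
    _ ≤ _ := by linarith

end AbsCos

theorem intervalIntegrable_abs_rpow {p : ℝ} (hp : -1 < p) (a b : ℝ) :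
    IntervalIntegrable (fun x : ℝ => |x| ^ p) volume a b := by
  have hpos : ∀ c, 0 ≤ c → IntervalIntegrable (fun x : ℝ => |x| ^ p) volume 0 c := fun c hc =>
    (intervalIntegral.intervalIntegrable_rpow' hp).congr fun x hx => by
      rw [uIoc_of_le hc] at hx
      rw [abs_of_pos hx.1]
  have hall : ∀ c, IntervalIntegrable (fun x : ℝ => |x| ^ p) volume 0 c := fun c => by
    rcases le_total 0 c with hc | hc
    · exact hpos c hc
    · simpa using ((IntervalIntegrable.iff_comp_neg).1 (hpos (-c) (by linarith)))
  exact (hall a).symm.trans (hall b)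

theorem rpow_add_one_div_le_setIntegral_abs_rpow {p : ℝ} (hp : -1 < p) {R : ℝ} (hR : 0 ≤ R) :
    R ^ (p + 1) / (p + 1) ≤ ∫ s in Ioo (-R) R, |s| ^ p := by
  have hhalf : ∫ s in Ioo 0 R, |s| ^ p = R ^ (p + 1) / (p + 1) := by
    rw [setIntegral_congr_fun measurableSet_Ioo fun s hs => by rw [abs_of_pos hs.1],
      ← integral_Ioc_eq_integral_Ioo, ← intervalIntegral.integral_of_le hR, integral_rpow (.inl hp),
      zero_rpow (by linarith), sub_zero]
  rw [← hhalf]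
  refine setIntegral_mono_set ?_ (ae_of_all _ fun s => by positivity)
    (Ioo_subset_Ioo (by linarith) le_rfl).eventuallyLE
  exact (intervalIntegrable_iff_integrableOn_Ioo_of_le (by linarith)).1
    (intervalIntegrable_abs_rpow hp _ _)

theorem ofReal_integral_mul_integral_eq_lintegral_prod {α β : Type*} [MeasurableSpace α]
    [MeasurableSpace β] {μ : Measure α} {ν : Measure β} [SFinite ν] {f : α → ℝ} {g : β → ℝ}
    (hf0 : 0 ≤ f) (hg0 : 0 ≤ g) (hf : Integrable f μ) (hg : Integrable g ν) :
    ENNReal.ofReal ((∫ x, f x ∂μ) * ∫ y, g y ∂ν) =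
      ∫⁻ q, ENNReal.ofReal (f q.1 * g q.2) ∂μ.prod ν := by
  rw [ENNReal.ofReal_mul (integral_nonneg hf0), ofReal_integral_eq_lintegral_ofReal hf
    (ae_of_all _ hf0), ofReal_integral_eq_lintegral_ofReal hg (ae_of_all _ hg0),
    ← lintegral_prod_mul hf.aemeasurable.ennreal_ofReal hg.aemeasurable.ennreal_ofReal]
  simp_rw [ENNReal.ofReal_mul (hf0 _)]

section Cylinder

local notation "E3" => EuclideanSpace ℝ (Fin 3)

theorem exists_lower_bound_cylinder_integral (e0 : E3) (he0 : ‖e0‖ = 1) :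
    ∃ c > (0:ℝ), ∀ r ≥ (1:ℝ),
      c * r ^ ((2/5) : ℝ) ≤
        r ^ (-(7/2) : ℝ) *
          (∫ s in Ioo (-(r ^ ((3/2) : ℝ))) (r ^ ((3/2) : ℝ)), |s| ^ (-(2/5) : ℝ)) *
          ∫ y in ball (0 : E3) r, |cos ⟪e0, y⟫| := by
  set V := volume.real (ball (0 : E3) 1)
  have hV : 0 < V :=
    ENNReal.toReal_pos (measure_ball_pos volume _ one_pos).ne' measure_ball_lt_top.ne
  refine ⟨V / 250, by positivity, fun r hr => ?_⟩
  have hr0 : 0 < r := by linarith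
  have htime : r ^ ((9/10) : ℝ) ≤
      ∫ s in Ioo (-(r ^ ((3/2) : ℝ))) (r ^ ((3/2) : ℝ)), |s| ^ (-(2/5) : ℝ) := by
    refine le_trans ?_ (rpow_add_one_div_le_setIntegral_abs_rpow (by norm_num) (by positivity))
    rw [← rpow_mul hr0.le]
    norm_num
    linarith [rpow_nonneg hr0.le (9/10 : ℝ)]
  have hspace : V / 250 * r ^ 3 ≤ ∫ y in ball (0 : E3) r, |cos ⟪e0, y⟫| := by
    have h := pow_finrank_mul_le_setIntegral_abs_cos volume he0 hr
    rw [finrank_euclideanSpace_fin] at h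
    convert h using 3
    norm_num
  have hexp : r ^ (-(7/2) : ℝ) * r ^ ((9/10) : ℝ) * r ^ (3 : ℕ) = r ^ ((2/5) : ℝ) := by
    rw [← Real.rpow_natCast, ← rpow_add hr0, ← rpow_add hr0]
    norm_num
  calc V / 250 * r ^ ((2/5) : ℝ) = r ^ (-(7/2) : ℝ) * r ^ ((9/10) : ℝ) * (V / 250 * r ^ 3) := by
        rw [← hexp]; ring
    _ ≤ _ := by gcongr

theorem ofReal_cylinder_integral_le_lintegral_parabolic_ball (e0 : E3) {r : ℝ} (hr : 0 < r) :
    ENNReal.ofReal ((∫ s in Ioo (-(r ^ ((3/2) : ℝ))) (r ^ ((3/2) : ℝ)), |s| ^ (-(2/5) : ℝ)) *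
        ∫ y in ball (0 : E3) r, |cos ⟪e0, y⟫|) ≤
      ∫⁻ q in {q : ℝ × E3 | |0 - q.1| ^ ((2/3) : ℝ) + ‖0 - q.2‖ < 2 * r},
        ENNReal.ofReal (|q.1| ^ (-(2/5) : ℝ) * |cos ⟪e0, q.2⟫|) := by
  have hsub : Ioo (-(r ^ ((3/2) : ℝ))) (r ^ ((3/2) : ℝ)) ×ˢ ball (0 : E3) r ⊆
      {q : ℝ × E3 | |0 - q.1| ^ ((2/3) : ℝ) + ‖0 - q.2‖ < 2 * r} := by
    rintro ⟨s, y⟩ ⟨hs, hy⟩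
    have hs' : |s| ^ ((2/3) : ℝ) < r := by
      calc |s| ^ ((2/3) : ℝ) < (r ^ ((3/2) : ℝ)) ^ ((2/3) : ℝ) :=
            rpow_lt_rpow (abs_nonneg s) (abs_lt.2 hs) (by norm_num)
        _ = r := by rw [← rpow_mul hr.le]; norm_num
    simp only [mem_ofPred_eq, zero_sub, abs_neg, norm_neg]
    linarith [mem_ball_zero_iff.1 hy]
  have htime : IntegrableOn (fun s : ℝ => |s| ^ (-(2/5) : ℝ))
      (Ioo (-(r ^ ((3/2) : ℝ))) (r ^ ((3/2) : ℝ))) :=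
    (intervalIntegrable_iff_integrableOn_Ioo_of_le (by linarith [rpow_pos_of_pos hr (3/2)])).1
      (intervalIntegrable_abs_rpow (by norm_num) _ _)
  have hspace : IntegrableOn (fun y : E3 => |cos ⟪e0, y⟫|) (ball 0 r) :=
    ((by fun_prop : Continuous fun y : E3 => |cos ⟪e0, y⟫|).locallyIntegrable.integrableOn_isCompact
      (isCompact_closedBall 0 r)).mono_set ball_subset_closedBall
  rw [ofReal_integral_mul_integral_eq_lintegral_prod (fun s => rpow_nonneg (abs_nonneg s) _)
    (fun y => abs_nonneg _) htime hspace, Measure.prod_restrict, ← Measure.volume_eq_prod]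
  exact lintegral_mono_set hsub

end Cylinder

/-- Counterexample: with `d = 3`, `α = 3/2` and `g(t,x) = |t|^{-2/5}|cos(e₀·x)|`
(`|e₀| = 1`), the parabolic Morrey `𝓜^{1,9/2}_α` norm of `g` is infinite;
more precisely the basic lower bound
`r^{-7/2} ∫_{|s|<r^{3/2}} |s|^{-2/5} ds · ∫_{|y|<r} |cos(e₀·y)| dy ≥ c r^{2/5}`
holds for `r ≥ 1`, so the supremum over `r > 0` diverges. -/
theorem stmt_16 (e0 : EuclideanSpace ℝ (Fin 3)) (he0 : ‖e0‖ = 1) :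
    (⨆ r > (0:ℝ), ⨆ t ≥ (0:ℝ), ⨆ x : EuclideanSpace ℝ (Fin 3),
        ENNReal.ofReal (r ^ (-(7/2) : ℝ)) *
          ∫⁻ q in {q : ℝ × EuclideanSpace ℝ (Fin 3) |
              |t - q.1| ^ ((2/3) : ℝ) + ‖x - q.2‖ < r},
            ENNReal.ofReal (|q.1| ^ (-(2/5) : ℝ) * |Real.cos ⟪e0, q.2⟫|)) = ⊤ ∧
    ∃ c > (0:ℝ), ∀ r ≥ (1:ℝ),
      c * r ^ ((2/5) : ℝ) ≤
        r ^ (-(7/2) : ℝ) *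
          (∫ s in Set.Ioo (-(r ^ ((3/2) : ℝ))) (r ^ ((3/2) : ℝ)), |s| ^ (-(2/5) : ℝ)) *
          ∫ y in Metric.ball (0 : EuclideanSpace ℝ (Fin 3)) r, |Real.cos ⟪e0, y⟫| := by
  obtain ⟨c, hc, hlow⟩ := exists_lower_bound_cylinder_integral e0 he0
  refine ⟨?_, c, hc, hlow⟩
  rw [eq_top_iff, ← ENNReal.iSup_natCast]
  refine iSup_le fun n => ?_
  obtain ⟨r, hrn, hr1⟩ : ∃ r : ℝ, n ≤ 2 ^ (-(7/2) : ℝ) * c * r ^ ((2/5) : ℝ) ∧ 1 ≤ r :=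
    ((((tendsto_rpow_atTop (by norm_num)).const_mul_atTop (by positivity)).eventually_ge_atTop
      (n : ℝ)).and (eventually_ge_atTop 1)).exists
  have hr0 : 0 < r := by linarith
  calc (n : ℝ≥0∞)
      ≤ ENNReal.ofReal ((2 * r) ^ (-(7/2) : ℝ) *
          ((∫ s in Ioo (-(r ^ ((3/2) : ℝ))) (r ^ ((3/2) : ℝ)), |s| ^ (-(2/5) : ℝ)) *
            ∫ y in ball (0 : EuclideanSpace ℝ (Fin 3)) r, |cos ⟪e0, y⟫|)) := by
        rw [← ENNReal.ofReal_natCast, mul_rpow zero_le_two hr0.le]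
        refine ENNReal.ofReal_le_ofReal (hrn.trans ?_)
        have := mul_le_mul_of_nonneg_left (hlow r hr1) (by positivity : (0 : ℝ) ≤ 2 ^ (-(7/2) : ℝ))
        linarith
    _ ≤ ENNReal.ofReal ((2 * r) ^ (-(7/2) : ℝ)) *
          ∫⁻ q in {q : ℝ × EuclideanSpace ℝ (Fin 3) | |0 - q.1| ^ ((2/3) : ℝ) + ‖0 - q.2‖ < 2 * r},
            ENNReal.ofReal (|q.1| ^ (-(2/5) : ℝ) * |cos ⟪e0, q.2⟫|) := by
        rw [ENNReal.ofReal_mul (by positivity)]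
        gcongr
        exact ofReal_cylinder_integral_le_lintegral_parabolic_ball e0 hr0
    _ ≤ _ := by
        refine le_iSup₂_of_le (2 * r) (by positivity) (le_iSup₂_of_le (0 : ℝ) le_rfl ?_)
        exact le_iSup_of_le (0 : EuclideanSpace ℝ (Fin 3)) le_rfl
end
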